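/- For a finite digraph D, the following are equivalent: (C) any two vertices in the same coreset have equal successor sets; (D) for every edge (u,v), the predecessor set β(v) equals the coreset containing u. -/

import Mathlib

variable {V : Type*}

/-- Successor set: vertices with a predecessor in `S`. -/
def succSet (E : V → V → Prop) (S : Set V) : Set V := {v | ∃ u ∈ S, E u v}

/-- Predecessor set: vertices with a successor in `S`. -/
def predSet (E : V → V → Prop) (S : Set V) : Set V := {u | ∃ v ∈ S, E u v}

/-- A nontrivial coreset: a minimal nonempty set `U` with `β(α(U)) = U`. -/
def IsCoreset (E : V → V → Prop) (U : Set V) : Prop :=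
  U.Nonempty ∧ predSet E (succSet E U) = U ∧
    ∀ U' ⊆ U, U'.Nonempty → predSet E (succSet E U') = U' → U' = U

/-- The set of all sinks (the trivial coreset). -/
def sinks (E : V → V → Prop) : Set V := {v | ∀ w, ¬ E v w}

/-- The set of all sources. -/
def sources (E : V → V → Prop) : Set V := {v | ∀ u, ¬ E u v}

/-- A coreset: the trivial coreset (all sinks) or a nontrivial coreset. -/
def IsCoresetGen (E : V → V → Prop) (U : Set V) : Prop :=
  U = sinks E ∨ IsCoreset E U

/- ========== auxiliary lemmas ========== -/

private lemma succSet_mono (E : V → V → Prop) {S T : Set V} (h : S ⊆ T) :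
    succSet E S ⊆ succSet E T := fun v ⟨u, hu, huv⟩ => ⟨u, h hu, huv⟩

private lemma predSet_mono (E : V → V → Prop) {S T : Set V} (h : S ⊆ T) :
    predSet E S ⊆ predSet E T := fun v ⟨u, hu, huv⟩ => ⟨u, h hu, huv⟩

private lemma core_mono (E : V → V → Prop) {S T : Set V} (h : S ⊆ T) :
    predSet E (succSet E S) ⊆ predSet E (succSet E T) :=
  predSet_mono E (succSet_mono E h)

/-- Inside any nonempty `βα`-subinvariant set whose elements all have successors,
there is a coreset. -/
private lemma exists_coreset_subset [Finite V] (E : V → V → Prop) {S : Set V}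
    (hne : S.Nonempty) (hsub : predSet E (succSet E S) ⊆ S)
    (hsucc : ∀ s ∈ S, ∃ a, E s a) :
    ∃ U, U ⊆ S ∧ IsCoreset E U := by
  set fam : Set (Set V) := {T | T ⊆ S ∧ T.Nonempty ∧ predSet E (succSet E T) ⊆ T} with hfam
  have hSfam : S ∈ fam := ⟨le_refl _, hne, hsub⟩
  obtain ⟨T, hT, hmin⟩ :=
    Set.Finite.exists_minimalFor id fam (Set.toFinite fam) ⟨S, hSfam⟩
  obtain ⟨hTS, hTne, hTsub⟩ := hT
  -- f T is in the family
  have hfTne : (predSet E (succSet E T)).Nonempty := by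
    obtain ⟨t, ht⟩ := hTne
    obtain ⟨a, ha⟩ := hsucc t (hTS ht)
    exact ⟨t, a, ⟨t, ht, ha⟩, ha⟩
  have hfTfam : predSet E (succSet E T) ∈ fam :=
    ⟨hTsub.trans hTS, hfTne, core_mono E hTsub⟩
  have hfT : predSet E (succSet E T) = T := Set.Subset.antisymm hTsub (hmin hfTfam hTsub)
  refine ⟨T, hTS, hTne, hfT, ?_⟩
  intro U' hU'T hU'ne hU'fix
  exact Set.Subset.antisymm hU'T (hmin ⟨hU'T.trans hTS, hU'ne, le_of_eq hU'fix⟩ hU'T)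

/-- Two coresets sharing a point are equal. -/
private lemma coreset_eq_of_mem [Finite V] (E : V → V → Prop) {U W : Set V}
    (hU : IsCoreset E U) (hW : IsCoreset E W) {s : V} (hsU : s ∈ U) (hsW : s ∈ W) :
    U = W := by
  have hsub : predSet E (succSet E (U ∩ W)) ⊆ U ∩ W := by
    intro t ht
    exact ⟨hU.2.1 ▸ core_mono E Set.inter_subset_left ht,
            hW.2.1 ▸ core_mono E Set.inter_subset_right ht⟩
  have hsucc : ∀ t ∈ U ∩ W, ∃ a, E t a := by
    intro t ht
    have h := ht.1
    rw [← hU.2.1] at h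
    obtain ⟨a, _, hta⟩ := h
    exact ⟨a, hta⟩
  obtain ⟨T, hTsub, hT⟩ := exists_coreset_subset E (S := U ∩ W) ⟨s, hsU, hsW⟩ hsub hsucc
  have h1 : T = U := hU.2.2 T (hTsub.trans Set.inter_subset_left) hT.1 hT.2.1
  have h2 : T = W := hW.2.2 T (hTsub.trans Set.inter_subset_right) hT.1 hT.2.1
  rw [← h1, h2]

/-- Backwards propagation along alternating chains. -/
private lemma mem_of_iterate (E : V → V → Prop) (u : V) {U : Set V}
    (hU : predSet E (succSet E U) ⊆ U) :
    ∀ n, ∀ t ∈ U, t ∈ (fun S => predSet E (succSet E S))^[n] ({u} : Set V) → u ∈ U := by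
  intro n
  induction n with
  | zero =>
    intro t htU ht
    rw [Function.iterate_zero_apply, Set.mem_singleton_iff] at ht
    rwa [ht] at htU
  | succ n ih =>
    intro t htU ht
    rw [Function.iterate_succ_apply'] at ht
    obtain ⟨a, ⟨w, hwS, hwa⟩, hta⟩ := ht
    exact ih w (hU ⟨a, ⟨t, htU, hta⟩, hwa⟩) hwS

/-- Every non-sink vertex lies in some (nontrivial) coreset. -/
private lemma exists_coreset_mem [Finite V] (E : V → V → Prop) {u v : V} (huv : E u v) :
    ∃ U, IsCoreset E U ∧ u ∈ U := by
  set f : Set V → Set V := fun S => predSet E (succSet E S) with hf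
  have hitmono : ∀ n, ∀ {S T : Set V}, S ⊆ T → f^[n] S ⊆ f^[n] T := by
    intro n
    induction n with
    | zero => intro S T h; simpa using h
    | succ n ih =>
      intro S T h
      rw [Function.iterate_succ_apply, Function.iterate_succ_apply]
      exact ih (core_mono E h)
  have h0 : ({u} : Set V) ⊆ f {u} := by
    intro x hx
    rw [Set.mem_singleton_iff] at hx
    rw [hx]
    exact ⟨v, ⟨u, rfl, huv⟩, huv⟩
  have hstep : ∀ n, f^[n] ({u} : Set V) ⊆ f^[n+1] ({u} : Set V) := by
    intro n
    rw [Function.iterate_succ_apply]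
    exact hitmono n h0
  have hmono : Monotone (fun n => f^[n] ({u} : Set V)) :=
    monotone_nat_of_le_succ hstep
  obtain ⟨F, ⟨N, hN⟩, hmax⟩ :=
    Set.Finite.exists_maximalFor id (Set.range (fun n => f^[n] ({u} : Set V)))
      (Set.toFinite _) ⟨{u}, 0, by simp⟩
  have hN' : f^[N] ({u} : Set V) = F := hN
  have hFfix : f F = F := by
    have h1 : F ⊆ f^[N+1] ({u} : Set V) := by rw [← hN']; exact hstep N
    have h2 := @hmax (f^[N+1] ({u} : Set V)) ⟨N+1, rfl⟩ h1
    have h3 : F = f^[N+1] ({u} : Set V) := Set.Subset.antisymm h1 h2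
    rw [Function.iterate_succ_apply', hN'] at h3
    exact h3.symm
  have huF : u ∈ F := by
    rw [← hN']
    have h4 : ({u} : Set V) ⊆ f^[N] ({u} : Set V) := by
      simpa using hmono (Nat.zero_le N)
    exact h4 rfl
  have hsucc : ∀ s ∈ F, ∃ a, E s a := by
    intro s hs
    rw [← hFfix] at hs
    obtain ⟨a, _, hsa⟩ := hs
    exact ⟨a, hsa⟩
  obtain ⟨U, hUF, hU⟩ := exists_coreset_subset E ⟨u, huF⟩ (le_of_eq hFfix) hsucc
  obtain ⟨t, htU⟩ := hU.1
  have htiter : t ∈ f^[N] ({u} : Set V) := by rw [hN']; exact hUF htU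
  exact ⟨U, hU, mem_of_iterate E u (le_of_eq hU.2.1) N t htU htiter⟩

/-- Equivalence of conditions (C) and (D) of the line-digraph characterization:
any two vertices in the same coreset have equal successor sets iff for every edge
`(u,v)` the predecessor set of `v` equals the coreset containing `u`. -/
theorem stmt13 {V : Type*} [Finite V] (E : V → V → Prop) :
    (∀ U : Set V, IsCoresetGen E U →
      ∀ u ∈ U, ∀ x ∈ U, succSet E {u} = succSet E {x}) ↔
    (∀ u v : V, E u v → ∃ U : Set V, IsCoresetGen E U ∧ u ∈ U ∧ predSet E {v} = U) := by
  constructor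
  · intro hC u v huv
    obtain ⟨U, hU, huU⟩ := exists_coreset_mem E huv
    refine ⟨U, Or.inr hU, huU, ?_⟩
    apply Set.Subset.antisymm
    · intro w hw
      obtain ⟨v', hv', hwv⟩ := hw
      rw [Set.mem_singleton_iff] at hv'
      rw [hv'] at hwv
      have hmem : w ∈ predSet E (succSet E U) := ⟨v, ⟨u, huU, huv⟩, hwv⟩
      rwa [hU.2.1] at hmem
    · intro w hwU
      have hss := hC U (Or.inr hU) u huU w hwU
      have hv : v ∈ succSet E ({w} : Set V) := hss ▸ ⟨u, rfl, huv⟩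
      obtain ⟨w', hw', hwv⟩ := hv
      rw [Set.mem_singleton_iff] at hw'
      rw [hw'] at hwv
      exact ⟨v, rfl, hwv⟩
  · intro hD U hUgen u huU x hxU
    have key : ∀ a ∈ U, ∀ b ∈ U, succSet E {a} ⊆ succSet E {b} := by
      intro a ha b hb w hw
      obtain ⟨a', ha', haw⟩ := hw
      rw [Set.mem_singleton_iff] at ha'
      rw [ha'] at haw
      have hUcore : IsCoreset E U := by
        rcases hUgen with h | h
        · exact absurd haw ((h ▸ ha) w)
        · exact h
      obtain ⟨W, hWgen, haW, hWeq⟩ := hD a w haw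
      have hWcore : IsCoreset E W := by
        rcases hWgen with h | h
        · exact absurd haw ((h ▸ haW) w)
        · exact h
      have hUW : U = W := coreset_eq_of_mem E hUcore hWcore ha haW
      have hbW : b ∈ predSet E ({w} : Set V) := hWeq ▸ hUW ▸ hb
      obtain ⟨w', hw', hbw⟩ := hbW
      rw [Set.mem_singleton_iff] at hw'
      rw [hw'] at hbw
      exact ⟨b, rfl, hbw⟩
    exact Set.Subset.antisymm (key u huU x hxU) (key x hxU u huU)
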